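/- Let g: ℝ → ℝ be defined by g(ℓ, u, τ) = σ((ℓ + log u − log(1−u))/τ) where σ is the sigmoid and u ∼ Unif(0,1). Then as a random variable, g(ℓ, U, τ) converges in distribution, as τ → 0⁺, to a Bernoulli random variable with success probability σ(ℓ); specifically, P(g(ℓ,U,τ) > 1/2) = σ(ℓ) for every τ > 0. -/

import Mathlib

/-!
Write `L = ℓ + logit U`. Since `logit` inverts `σ` on `(0, 1)`, `L > 0` iff `U > σ(-ℓ)`, an event
of probability `1 - σ(-ℓ) = σ(ℓ)`, and `σ(L/τ) > 1/2` iff `L > 0` for every `τ > 0`. As `τ → 0⁺`,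
`σ(L/τ)` tends to the indicator of `L > 0` except on the null set `{U = σ(-ℓ)}`, so dominated
convergence (with bound `‖f‖`) gives the Bernoulli limit.
-/

open MeasureTheory Filter

/-- The sigmoid function `σ(x) = 1/(1+e^{−x})`. -/
noncomputable def sigmoid (x : ℝ) : ℝ := 1 / (1 + Real.exp (-x))

/-- The Binary Concrete relaxation `g(ℓ,u,τ) = σ((ℓ + log u − log(1−u))/τ)`. -/
noncomputable def binaryConcrete (ℓ u τ : ℝ) : ℝ :=
  sigmoid ((ℓ + Real.log u - Real.log (1 - u)) / τ)

open Set Topology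

lemma sigmoid_eq_real_sigmoid : sigmoid = Real.sigmoid := by
  funext x
  rw [sigmoid, Real.sigmoid_def, one_div]

noncomputable def logit (u : ℝ) : ℝ := Real.log u - Real.log (1 - u)

lemma binaryConcrete_eq (ℓ u τ : ℝ) :
    binaryConcrete ℓ u τ = Real.sigmoid ((ℓ + logit u) / τ) := by
  rw [binaryConcrete, logit, sigmoid_eq_real_sigmoid, add_sub_assoc]

lemma measurable_binaryConcrete (ℓ τ : ℝ) : Measurable fun u => binaryConcrete ℓ u τ := by
  unfold binaryConcrete sigmoid; fun_prop

lemma sigmoid_logit {u : ℝ} (hu : u ∈ Ioo (0 : ℝ) 1) : Real.sigmoid (logit u) = u := by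
  have h1u : 0 < 1 - u := sub_pos.mpr hu.2
  rw [Real.sigmoid_def, logit, neg_sub, Real.exp_sub, Real.exp_log hu.1, Real.exp_log h1u,
    one_add_div hu.1.ne', add_sub_cancel, inv_div, div_one]

lemma lt_logit_iff {a u : ℝ} (hu : u ∈ Ioo (0 : ℝ) 1) : a < logit u ↔ Real.sigmoid a < u := by
  conv_rhs => rw [← sigmoid_logit hu]
  exact Real.sigmoid_lt_iff.symm

lemma pos_add_logit_iff {ℓ u : ℝ} (hu : u ∈ Ioo (0 : ℝ) 1) :
    0 < ℓ + logit u ↔ Real.sigmoid (-ℓ) < u := by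
  rw [← lt_logit_iff hu, neg_lt_iff_pos_add']

lemma half_lt_binaryConcrete_iff {ℓ u τ : ℝ} (hτ : 0 < τ) (hu : u ∈ Ioo (0 : ℝ) 1) :
    1 / 2 < binaryConcrete ℓ u τ ↔ Real.sigmoid (-ℓ) < u := by
  rw [binaryConcrete_eq, one_div, ← Real.sigmoid_zero, Real.sigmoid_lt_iff,
    div_pos_iff_of_pos_right hτ, pos_add_logit_iff hu]

lemma tendsto_sigmoid_div_nhdsGT_zero {x : ℝ} (hx : x ≠ 0) :
    Tendsto (fun τ => Real.sigmoid (x / τ)) (𝓝[>] 0) (𝓝 (if 0 < x then 1 else 0)) := by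
  simp only [div_eq_mul_inv]
  rcases hx.lt_or_gt with hneg | hpos
  · rw [if_neg hneg.not_gt]
    exact Real.tendsto_sigmoid_atBot.comp
      ((tendsto_const_mul_atBot_of_neg hneg).mpr tendsto_inv_nhdsGT_zero)
  · rw [if_pos hpos]
    exact Real.tendsto_sigmoid_atTop.comp
      ((tendsto_const_mul_atTop_of_pos hpos).mpr tendsto_inv_nhdsGT_zero)

lemma tendsto_binaryConcrete {ℓ u : ℝ} (hu : u ∈ Ioo (0 : ℝ) 1) (hne : u ≠ Real.sigmoid (-ℓ)) :
    Tendsto (fun τ => binaryConcrete ℓ u τ) (𝓝[>] 0)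
      (𝓝 (if Real.sigmoid (-ℓ) < u then 1 else 0)) := by
  have hL : ℓ + logit u ≠ 0 := by
    intro h
    refine hne ?_
    rw [← sigmoid_logit hu, ← eq_neg_of_add_eq_zero_right h]
  simp_rw [binaryConcrete_eq, ← pos_add_logit_iff hu]
  exact tendsto_sigmoid_div_nhdsGT_zero hL

lemma volume_restrict_Ioo_zero_one_Ioi {c : ℝ} (hc : 0 ≤ c) :
    volume.restrict (Ioo (0 : ℝ) 1) (Ioi c) = ENNReal.ofReal (1 - c) := by
  rw [Measure.restrict_apply measurableSet_Ioi, Ioi_inter_Ioo, max_eq_left hc, Real.volume_Ioo]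

instance isProbabilityMeasure_volume_restrict_Ioo_zero_one :
    IsProbabilityMeasure (volume.restrict (Ioo (0 : ℝ) 1)) :=
  ⟨by simp [Real.volume_Ioo]⟩

lemma integral_ite_mem {α E : Type*} [MeasurableSpace α] [NormedAddCommGroup E]
    [NormedSpace ℝ E] [CompleteSpace E] (μ : Measure α) [IsProbabilityMeasure μ] {s : Set α}
    (hs : MeasurableSet s) [DecidablePred (· ∈ s)] (a b : E) :
    ∫ x, (if x ∈ s then a else b) ∂μ = μ.real s • a + (1 - μ.real s) • b := by
  rw [← probReal_compl_eq_one_sub hs, ← setIntegral_const, ← setIntegral_const]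
  exact integral_piecewise hs (integrable_const a).integrableOn (integrable_const b).integrableOn

/-- With `U ∼ Unif(0,1)`: for every `τ > 0`, `P(g(ℓ,U,τ) > 1/2) = σ(ℓ)`, and as
`τ → 0⁺` the random variable `g(ℓ,U,τ)` converges in distribution to a Bernoulli
random variable with success probability `σ(ℓ)` (on values `1` and `0`). -/
theorem binary_concrete_limit (ℓ : ℝ) :
    (∀ τ : ℝ, 0 < τ →
      ((volume.restrict (Set.Ioo (0 : ℝ) 1))
          {u | 1 / 2 < binaryConcrete ℓ u τ}).toReal = sigmoid ℓ) ∧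
      (∀ f : BoundedContinuousFunction ℝ ℝ,
        Tendsto (fun τ : ℝ => ∫ u, f (binaryConcrete ℓ u τ)
            ∂(volume.restrict (Set.Ioo (0 : ℝ) 1)))
          (nhdsWithin 0 (Set.Ioi 0))
          (nhds (sigmoid ℓ * f 1 + (1 - sigmoid ℓ) * f 0))) := by
  set μ := volume.restrict (Ioo (0 : ℝ) 1)
  set c := Real.sigmoid (-ℓ)
  have hμ : μ.real (Ioi c) = sigmoid ℓ := by
    rw [measureReal_def, volume_restrict_Ioo_zero_one_Ioi (Real.sigmoid_pos _).le,
      Real.sigmoid_neg, sub_sub_cancel, sigmoid_eq_real_sigmoid,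
      ENNReal.toReal_ofReal (Real.sigmoid_pos _).le]
  have hIoo : ∀ᵐ u ∂μ, u ∈ Ioo (0 : ℝ) 1 := ae_restrict_mem measurableSet_Ioo
  refine ⟨fun τ hτ => ?_, fun f => ?_⟩
  · have hset : {u | 1 / 2 < binaryConcrete ℓ u τ} =ᵐ[μ] Ioi c :=
      hIoo.mono fun u hu => propext (half_lt_binaryConcrete_iff hτ hu)
    rw [measure_congr hset, ← measureReal_def, hμ]
  · have hne : ∀ᵐ u ∂μ, u ≠ c := ae_restrict_of_ae (Measure.ae_ne volume c)
    have hlim := tendsto_integral_filter_of_dominated_convergence (fun _ => ‖f‖)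
      (Eventually.of_forall fun τ => (f.continuous.measurable.comp
        (measurable_binaryConcrete ℓ τ)).aestronglyMeasurable)
      (Eventually.of_forall fun τ => Eventually.of_forall fun u => f.norm_coe_le_norm _)
      (integrable_const _)
      (by
        filter_upwards [hIoo, hne] with u hu hne
        exact (f.continuous.tendsto _).comp (tendsto_binaryConcrete hu hne))
    simp_rw [apply_ite f, ← mem_Ioi] at hlim
    rw [integral_ite_mem μ measurableSet_Ioi, hμ, smul_eq_mul, smul_eq_mul] at hlim
    exact hlim
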